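/- Let ε > 0, δ ∈ (0, log(1+ε)/e), ω ∈ (0, δ], and c > 0. If a real number t ≥ 1 satisfies (1/t)·log(log((1+ε)t)/ω) ≥ c, then t ≤ (1/c)·log(2·log((1+ε)/(cω))/ω). -/
import Mathlib


open Real

/-- Inversion inequality (eq. 1 of the lil'UCB analysis). -/
theorem lil_ucb_inversion (ε δ ω c t : ℝ)
    (hε : 0 < ε) (hδ : δ ∈ Set.Ioo (0 : ℝ) (Real.log (1 + ε) / Real.exp 1))
    (hω : ω ∈ Set.Ioc (0 : ℝ) δ) (hc : 0 < c) (ht : 1 ≤ t)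
    (h : c ≤ (1 / t) * Real.log (Real.log ((1 + ε) * t) / ω)) :
    t ≤ (1 / c) * Real.log (2 * Real.log ((1 + ε) / (c * ω)) / ω) := by
  obtain ⟨hω0, hωδ⟩ := hω
  have ht0 : (0:ℝ) < t := lt_of_lt_of_le one_pos ht
  set x := c * t with hxdef
  have hx0 : 0 < x := mul_pos hc ht0
  have hε1 : (1:ℝ) < 1 + ε := by linarith
  have hlog1 : 0 < Real.log ((1 + ε) * t) := Real.log_pos (by nlinarith)
  have hypos : 0 < Real.log ((1 + ε) * t) / ω := div_pos hlog1 hω0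
  -- from h : x ≤ log (log((1+ε)t)/ω)
  have hct : x ≤ Real.log (Real.log ((1 + ε) * t) / ω) := by
    have h2 := mul_le_mul_of_nonneg_right h ht0.le
    have : (1 / t) * Real.log (Real.log ((1 + ε) * t) / ω) * t
        = Real.log (Real.log ((1 + ε) * t) / ω) := by
      field_simp
    rw [this] at h2
    linarith [h2, (by ring : c * t = x)]
  have hmain : ω * Real.exp x ≤ Real.log ((1 + ε) * t) := by
    have := (Real.exp_le_exp.2 hct).trans_eq (Real.exp_log hypos)
    calc ω * Real.exp x ≤ ω * (Real.log ((1 + ε) * t) / ω) :=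
          mul_le_mul_of_nonneg_left this hω0.le
      _ = Real.log ((1 + ε) * t) := by field_simp
  set L := Real.log ((1 + ε) / (c * ω)) with hLdef
  have hcω : 0 < c * ω := mul_pos hc hω0
  have hsplit : Real.log ((1 + ε) * t) = L + Real.log (ω * x) := by
    have hprod : (1 + ε) * t = ((1 + ε) / (c * ω)) * (ω * x) := by
      field_simp [hxdef]; ring
    rw [hprod, Real.log_mul (by positivity) (by positivity)]
  -- e * x ≤ exp x
  have hexp : Real.exp 1 * x ≤ Real.exp x := by
    have h1 : x - 1 + 1 ≤ Real.exp (x - 1) := Real.add_one_le_exp (x - 1)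
    have h2 : Real.exp 1 * (x - 1 + 1) ≤ Real.exp 1 * Real.exp (x - 1) :=
      mul_le_mul_of_nonneg_left h1 (Real.exp_pos 1).le
    rw [← Real.exp_add] at h2
    simpa using h2
  -- log y ≤ y / e for y > 0
  have hloge : ∀ y : ℝ, 0 < y → Real.log y ≤ y / Real.exp 1 := by
    intro y hy
    have h1 : Real.log (y / Real.exp 1) ≤ y / Real.exp 1 - 1 :=
      Real.log_le_sub_one_of_pos (by positivity)
    rw [Real.log_div hy.ne' (Real.exp_pos 1).ne', Real.log_exp] at h1
    linarith
  have he1 : (2:ℝ) ≤ Real.exp 1 := by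
    have := Real.add_one_le_exp (1:ℝ); linarith
  have hlogωx := hloge (ω * x) (by positivity)
  have hepos : (0:ℝ) < Real.exp 1 := Real.exp_pos 1
  -- chain: ω * e * x ≤ L + ω*x/e
  have hchain : ω * (Real.exp 1 * x) ≤ L + ω * x / Real.exp 1 := by
    have h1 : ω * (Real.exp 1 * x) ≤ ω * Real.exp x :=
      mul_le_mul_of_nonneg_left hexp hω0.le
    have h2 := hmain
    rw [hsplit] at h2
    linarith
  have hωxL : ω * x * (Real.exp 1 - 1 / Real.exp 1) ≤ L := by
    have : ω * x / Real.exp 1 = ω * x * (1 / Real.exp 1) := by ring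
    nlinarith [hchain]
  have hinv : 1 / Real.exp 1 ≤ 1 / 2 := one_div_le_one_div_of_le two_pos he1
  have hfac : (1:ℝ) < Real.exp 1 - 1 / Real.exp 1 := by linarith
  have hLpos : 0 < L := by nlinarith [mul_pos hω0 hx0]
  have hωxleL : ω * x ≤ L := by nlinarith [mul_pos hω0 hx0]
  have hlogle : Real.log (ω * x) ≤ L := by
    have : ω * x / Real.exp 1 ≤ ω * x := by
      rw [div_le_iff₀ hepos]; nlinarith [mul_pos hω0 hx0]
    linarith
  have hfinal : ω * Real.exp x ≤ 2 * L := by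
    have h2 := hmain; rw [hsplit] at h2; linarith
  -- conclude
  have h2L : 0 < 2 * L / ω := by positivity
  have hxle : x ≤ Real.log (2 * L / ω) := by
    rw [Real.le_log_iff_exp_le h2L, le_div_iff₀ hω0]
    linarith [hfinal]
  rw [hxdef] at hxle
  calc t = (1 / c) * (c * t) := by field_simp
    _ ≤ (1 / c) * Real.log (2 * L / ω) :=
        mul_le_mul_of_nonneg_left hxle (by positivity)
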